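/- For the exponential discount function η(t) = e^{−δ·t} with δ > 0, and any n ≥ 2 and q > 0, the Ladder protocol costs satisfy χ_1 < χ_2, where χ_i = q·e^{−δ} + (i−1)·q·e^{−δ(n−i+2)} − i·q·e^{−δ(n+i)}; hence the protocol is not financially fair under exponential discounting. -/
import Mathlib

/-- Under exponential discounting η(t) = e^{−δt} with δ > 0, for any n ≥ 2 and q > 0,
the Ladder protocol costs satisfy χ₁ < χ₂, where
χ_i = q·e^{−δ} + (i−1)·q·e^{−δ(n−i+2)} − i·q·e^{−δ(n+i)}. -/
theorem ladder_unfair_exponential_discount (n : ℕ) (q δ : ℝ)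
    (hn : 2 ≤ n) (hq : 0 < q) (hδ : 0 < δ) :
    q * Real.exp (-δ) + ((1 : ℝ) - 1) * q * Real.exp (-δ * ((n : ℝ) - 1 + 2))
        - (1 : ℝ) * q * Real.exp (-δ * ((n : ℝ) + 1))
      < q * Real.exp (-δ) + ((2 : ℝ) - 1) * q * Real.exp (-δ * ((n : ℝ) - 2 + 2))
        - (2 : ℝ) * q * Real.exp (-δ * ((n : ℝ) + 2)) := by
  have h1 : Real.exp (-δ * ((n : ℝ) + 2)) < Real.exp (-δ * ((n : ℝ) + 1)) := by
    apply Real.exp_lt_exp.2; nlinarith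
  have h2 : Real.exp (-δ * ((n : ℝ) + 2)) < Real.exp (-δ * ((n : ℝ) - 2 + 2)) := by
    apply Real.exp_lt_exp.2; nlinarith
  nlinarith [Real.exp_pos (-δ * ((n : ℝ) + 2))]
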